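/- Let r ≥ 1 be an integer, p, q nonzero complex numbers with |p| < 1, |q| < 1, and m ∈ ℤ. For every nonzero z ∈ ℂ not a pole of either side, γ^{(r)}(z, m; p,q) = [Γ((pq)^m q^{r−m} z; p^r, q^r, pq) / Γ(q^{r−m} z; p^r, q^r, pq)] · [Γ((pq)^{r−m} p^m z; p^r, q^r, pq) / Γ(p^m z; p^r, q^r, pq)], where Γ(·;·,·,·) is the second-order elliptic gamma function. -/

import Mathlib

open Complex Finset

noncomputable section

/-- The infinite q-Pochhammer symbol `(z;p)_∞ = ∏_{j≥0} (1 - z p^j)`. -/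
def qPochInf (z p : ℂ) : ℂ := ∏' j : ℕ, (1 - z * p ^ j)

/-- The theta function `θ(z;p) = (z;p)_∞ (p z⁻¹; p)_∞`. -/
def theta0 (z p : ℂ) : ℂ := qPochInf z p * qPochInf (p * z⁻¹) p

/-- The elliptic gamma function `Γ(z;p,q)`. -/
def ellGamma (z p q : ℂ) : ℂ :=
  ∏' jk : ℕ × ℕ,
    (1 - z⁻¹ * p ^ (jk.1 + 1) * q ^ (jk.2 + 1)) / (1 - z * p ^ jk.1 * q ^ jk.2)

/-- The second order elliptic gamma function `Γ(z;p,q,t)`. -/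
def ellGamma3 (z p q t : ℂ) : ℂ :=
  ∏' x : ℕ × ℕ × ℕ,
    (1 - z * p ^ x.1 * q ^ x.2.1 * t ^ x.2.2) *
      (1 - z⁻¹ * p ^ (x.1 + 1) * q ^ (x.2.1 + 1) * t ^ (x.2.2 + 1))

/-- The lens space elliptic gamma function `γ^{(r)}(z,m;p,q)`. -/
def lensGamma (r : ℕ) (z : ℂ) (m : ℤ) (p q : ℂ) : ℂ :=
  ellGamma (z * p ^ m) (p ^ r) (p * q) * ellGamma (z * q ^ ((r : ℤ) - m)) (q ^ r) (p * q)

/-- The rarefied elliptic gamma function `Γ^{(r)}(z,m;p,q)`, built with fixed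
square roots σ, τ satisfying `σ² = pq`, `τ² = p/q`, `στ = p`. -/
def rarGamma (r : ℕ) (z : ℂ) (m : ℤ) (p q σ τ : ℂ) : ℂ :=
  (-z / σ) ^ (m * (m - 1) / 2) * τ ^ (m * (m - 1) * (2 * m - 1) / 6) * lensGamma r z m p q

/-- `w` avoids the pole set `{P^{-j} Q^{-k} : j,k ≥ 0}` of `ellGamma w P Q`. -/
def notPole (w P Q : ℂ) : Prop := ∀ j k : ℕ, w ≠ P ^ (-(j : ℤ)) * Q ^ (-(k : ℤ))

/-- `z` is not a pole of either elliptic gamma factor of `lensGamma r z m p q`. -/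
def lensReg (r : ℕ) (z : ℂ) (m : ℤ) (p q : ℂ) : Prop :=
  notPole (z * p ^ m) (p ^ r) (p * q) ∧ notPole (z * q ^ ((r : ℤ) - m)) (q ^ r) (p * q)

/-!
Put `qPochInf₃ x P Q T = ∏_{j,k,l} (1 - x P^j Q^k T^l)` and
`qPochInf₂ x P T = ∏_{j,l} (1 - x P^j T^l)`. Then `Γ(w;P,Q,T) = qPochInf₃ w · qPochInf₃ (PQT/w)`
and `Γ(w;P,T) = qPochInf₂ (PT/w) / qPochInf₂ w`, while splitting off the factors with `k = 0` gives
`qPochInf₃ x = qPochInf₂ x · qPochInf₃ (Qx)`. Hence `Γ(Qw;P,Q,T) = Γ(w;P,T) Γ(w;P,Q,T)`, and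
symmetrically in `P` and `Q`. The two factors of `γ^{(r)}` are elliptic gamma functions with bases
`(p^r, pq)` and `(q^r, pq)`, so each is a ratio of two values of `Γ(·;p^r,q^r,pq)`; as
`(pq)^m q^{r-m} = q^r p^m` and `(pq)^{r-m} p^m = p^r q^{r-m}`, these are the ratios of the theorem.
-/

open Function

section InfiniteProducts

variable {ι : Type*} {v : ι → ℂ}

theorem multipliable_one_sub_of_summable_norm (hv : Summable (‖v ·‖)) :
    Multipliable (1 - v ·) := by
  simpa [sub_eq_add_neg] using
    multipliable_one_add_of_summable (f := (-v ·)) (by simpa using hv)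

theorem tprod_one_sub_ne_zero (hv : Summable (‖v ·‖)) (h : ∀ i, 1 - v i ≠ 0) :
    ∏' i, (1 - v i) ≠ 0 := by
  simpa [sub_eq_add_neg] using tprod_one_add_ne_zero_of_summable (f := (-v ·))
    (by simpa [sub_eq_add_neg] using h) (by simpa using hv)

theorem tprod_eq_mul_of_isCompl_range {M β γ δ : Type*} [CommMonoid M] [TopologicalSpace M]
    [ContinuousMul M] [T2Space M] {f : β → M} {g : γ → β} {h : δ → β}
    (hg : Injective g) (hh : Injective h) (hgh : IsCompl (Set.range g) (Set.range h))
    (hfg : Multipliable (f ∘ g)) (hfh : Multipliable (f ∘ h)) :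
    ∏' b, f b = (∏' c, f (g c)) * ∏' d, f (h d) :=
  ((hg.hasProd_range_iff.2 hfg.hasProd).mul_isCompl hgh
    (hh.hasProd_range_iff.2 hfh.hasProd)).tprod_eq

end InfiniteProducts

section DoubleAndTriplePochhammer

variable {P Q T : ℂ}

theorem summable_norm_geometric₂ (x : ℂ) (hP : ‖P‖ < 1) (hT : ‖T‖ < 1) :
    Summable fun n : ℕ × ℕ => ‖x * P ^ n.1 * T ^ n.2‖ := by
  have hPT := Summable.mul_norm (f := (P ^ ·)) (g := (T ^ ·))
    (by simpa using summable_geometric_of_lt_one (norm_nonneg _) hP)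
    (by simpa using summable_geometric_of_lt_one (norm_nonneg _) hT)
  exact (hPT.mul_left ‖x‖).congr fun n => by simp only [norm_mul]; ring

theorem summable_norm_geometric₃ (x : ℂ) (hP : ‖P‖ < 1) (hQ : ‖Q‖ < 1) (hT : ‖T‖ < 1) :
    Summable fun n : ℕ × ℕ × ℕ => ‖x * P ^ n.1 * Q ^ n.2.1 * T ^ n.2.2‖ := by
  have hPQT := Summable.mul_norm (f := (P ^ ·)) (g := fun n : ℕ × ℕ => Q ^ n.1 * T ^ n.2)
    (by simpa using summable_geometric_of_lt_one (norm_nonneg _) hP)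
    (by simpa using summable_norm_geometric₂ 1 hQ hT)
  exact (hPQT.mul_left ‖x‖).congr fun n => by simp only [norm_mul]; ring

def qPochInf₂ (x P T : ℂ) : ℂ := ∏' n : ℕ × ℕ, (1 - x * P ^ n.1 * T ^ n.2)

def qPochInf₃ (x P Q T : ℂ) : ℂ :=
  ∏' n : ℕ × ℕ × ℕ, (1 - x * P ^ n.1 * Q ^ n.2.1 * T ^ n.2.2)

theorem multipliable_qPochInf₂ (x : ℂ) (hP : ‖P‖ < 1) (hT : ‖T‖ < 1) :
    Multipliable fun n : ℕ × ℕ => 1 - x * P ^ n.1 * T ^ n.2 :=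
  multipliable_one_sub_of_summable_norm (summable_norm_geometric₂ x hP hT)

theorem multipliable_qPochInf₃ (x : ℂ) (hP : ‖P‖ < 1) (hQ : ‖Q‖ < 1) (hT : ‖T‖ < 1) :
    Multipliable fun n : ℕ × ℕ × ℕ => 1 - x * P ^ n.1 * Q ^ n.2.1 * T ^ n.2.2 :=
  multipliable_one_sub_of_summable_norm (summable_norm_geometric₃ x hP hQ hT)

theorem qPochInf₂_ne_zero {x : ℂ} (hP : ‖P‖ < 1) (hT : ‖T‖ < 1)
    (hx : ∀ j l : ℕ, 1 - x * P ^ j * T ^ l ≠ 0) : qPochInf₂ x P T ≠ 0 :=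
  tprod_one_sub_ne_zero (summable_norm_geometric₂ x hP hT) fun n => hx n.1 n.2

theorem qPochInf₃_eq_mul (x : ℂ) (hP : ‖P‖ < 1) (hQ : ‖Q‖ < 1) (hT : ‖T‖ < 1) :
    qPochInf₃ x P Q T = qPochInf₂ x P T * qPochInf₃ (Q * x) P Q T := by
  have hrange : Set.range (fun n : ℕ × ℕ × ℕ => (n.1, n.2.1 + 1, n.2.2)) =
      (Set.range fun n : ℕ × ℕ => (n.1, 0, n.2))ᶜ := by
    ext ⟨j, k, l⟩
    cases k <;> simp
  rw [qPochInf₃, tprod_eq_mul_of_isCompl_range (g := fun n : ℕ × ℕ => (n.1, 0, n.2))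
    (h := fun n : ℕ × ℕ × ℕ => (n.1, n.2.1 + 1, n.2.2))
    (fun _ _ h => by simpa [Prod.ext_iff] using h) (fun _ _ h => by simpa [Prod.ext_iff] using h)
    (hrange ▸ isCompl_compl)]
  · simp only [qPochInf₂, qPochInf₃, pow_zero, mul_one]
    exact congrArg _ (tprod_congr fun n => by ring)
  · simpa [comp_def] using multipliable_qPochInf₂ x hP hT
  · simpa [comp_def, pow_succ, mul_assoc, mul_left_comm] using
      multipliable_qPochInf₃ (Q * x) hP hQ hT

end DoubleAndTriplePochhammer

section EllipticGamma

variable {P Q T : ℂ}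

theorem notPole.one_sub_ne_zero {w : ℂ} (h : notPole w P T) (j l : ℕ) :
    1 - w * P ^ j * T ^ l ≠ 0 := by
  intro h0
  apply h j l
  rw [zpow_neg, zpow_neg, zpow_natCast, zpow_natCast, ← mul_inv]
  exact eq_inv_of_mul_eq_one_left (by linear_combination -h0)

theorem ellGamma_eq_div (w : ℂ) (hP : ‖P‖ < 1) (hT : ‖T‖ < 1)
    (hw : ∀ j l : ℕ, 1 - w * P ^ j * T ^ l ≠ 0) :
    ellGamma w P T = qPochInf₂ (w⁻¹ * P * T) P T / qPochInf₂ w P T := by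
  rw [ellGamma, qPochInf₂, qPochInf₂, ← (multipliable_qPochInf₂ _ hP hT).tprod_div₀
    (multipliable_qPochInf₂ w hP hT) (qPochInf₂_ne_zero hP hT hw)]
  exact tprod_congr fun n => by ring

theorem ellGamma3_eq_mul (w : ℂ) (hP : ‖P‖ < 1) (hQ : ‖Q‖ < 1) (hT : ‖T‖ < 1) :
    ellGamma3 w P Q T = qPochInf₃ w P Q T * qPochInf₃ (w⁻¹ * P * Q * T) P Q T := by
  rw [ellGamma3, qPochInf₃, qPochInf₃, ← (multipliable_qPochInf₃ w hP hQ hT).tprod_mul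
    (multipliable_qPochInf₃ _ hP hQ hT)]
  exact tprod_congr fun n => by ring

theorem ellGamma3_shift_q (w : ℂ) (hP : ‖P‖ < 1) (hQ : ‖Q‖ < 1) (hT : ‖T‖ < 1) (hQ₀ : Q ≠ 0)
    (hw : ∀ j l : ℕ, 1 - w * P ^ j * T ^ l ≠ 0) :
    ellGamma3 (Q * w) P Q T = ellGamma w P T * ellGamma3 w P Q T := by
  have hinv : (Q * w)⁻¹ * P * Q * T = w⁻¹ * P * T := by
    rw [mul_inv]; field_simp
  rw [ellGamma3_eq_mul _ hP hQ hT, ellGamma3_eq_mul _ hP hQ hT, hinv, ellGamma_eq_div w hP hT hw,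
    qPochInf₃_eq_mul w hP hQ hT, qPochInf₃_eq_mul (w⁻¹ * P * T) hP hQ hT]
  field_simp [qPochInf₂_ne_zero hP hT hw]

theorem ellGamma3_comm (w P Q T : ℂ) : ellGamma3 w P Q T = ellGamma3 w Q P T := by
  rw [ellGamma3, ellGamma3, ← (Involutive.toPerm (fun n : ℕ × ℕ × ℕ => (n.2.1, n.1, n.2.2))
    fun _ => rfl).tprod_eq]
  exact tprod_congr fun n => by dsimp [Involutive.toPerm]; ring

theorem ellGamma3_shift_p (w : ℂ) (hP : ‖P‖ < 1) (hQ : ‖Q‖ < 1) (hT : ‖T‖ < 1) (hP₀ : P ≠ 0)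
    (hw : ∀ j l : ℕ, 1 - w * Q ^ j * T ^ l ≠ 0) :
    ellGamma3 (P * w) P Q T = ellGamma w Q T * ellGamma3 w P Q T := by
  rw [ellGamma3_comm _ P, ellGamma3_comm w P]
  exact ellGamma3_shift_q w hQ hP hT hP₀ hw

end EllipticGamma

theorem lensGamma_as_ratio_of_ellGamma3_general
    (r : ℕ) (hr : 1 ≤ r) (p q : ℂ) (hp : p ≠ 0) (hq : q ≠ 0)
    (hp1 : ‖p‖ < 1) (hq1 : ‖q‖ < 1)
    (m : ℤ) (z : ℂ)
    (hreg : lensReg r z m p q)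
    (hden1 : ellGamma3 (q ^ ((r : ℤ) - m) * z) (p ^ r) (q ^ r) (p * q) ≠ 0)
    (hden2 : ellGamma3 (p ^ m * z) (p ^ r) (q ^ r) (p * q) ≠ 0) :
    lensGamma r z m p q =
      (ellGamma3 ((p * q) ^ m * q ^ ((r : ℤ) - m) * z) (p ^ r) (q ^ r) (p * q) /
          ellGamma3 (q ^ ((r : ℤ) - m) * z) (p ^ r) (q ^ r) (p * q)) *
        (ellGamma3 ((p * q) ^ ((r : ℤ) - m) * p ^ m * z) (p ^ r) (q ^ r) (p * q) /
          ellGamma3 (p ^ m * z) (p ^ r) (q ^ r) (p * q)) := by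
  have hP : ‖p ^ r‖ < 1 := by rw [norm_pow]; exact pow_lt_one₀ (norm_nonneg p) hp1 (by omega)
  have hQ : ‖q ^ r‖ < 1 := by rw [norm_pow]; exact pow_lt_one₀ (norm_nonneg q) hq1 (by omega)
  have hT : ‖p * q‖ < 1 := by
    rw [norm_mul]; exact mul_lt_one_of_nonneg_of_lt_one_left (norm_nonneg p) hp1 hq1.le
  have hq_split : q ^ r = q ^ m * q ^ ((r : ℤ) - m) := by
    rw [← zpow_add₀ hq, add_sub_cancel, zpow_natCast]
  have hp_split : p ^ r = p ^ ((r : ℤ) - m) * p ^ m := by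
    rw [← zpow_add₀ hp, sub_add_cancel, zpow_natCast]
  have hshift₁ : (p * q) ^ m * q ^ ((r : ℤ) - m) * z = q ^ r * (z * p ^ m) := by
    rw [hq_split, mul_zpow]; ring
  have hshift₂ : (p * q) ^ ((r : ℤ) - m) * p ^ m * z = p ^ r * (z * q ^ ((r : ℤ) - m)) := by
    rw [hp_split, mul_zpow]; ring
  rw [hshift₁, hshift₂]
  rw [mul_comm (q ^ _) z] at hden1 ⊢
  rw [mul_comm (p ^ m) z] at hden2 ⊢
  rw [ellGamma3_shift_q _ hP hQ hT (pow_ne_zero r hq) hreg.1.one_sub_ne_zero,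
    ellGamma3_shift_p _ hP hQ hT (pow_ne_zero r hp) hreg.2.one_sub_ne_zero, lensGamma]
  field_simp

/-- The lens-space elliptic gamma function as a ratio of second order elliptic gamma
functions (formula (3.4) of the paper). -/
theorem lensGamma_as_ratio_of_ellGamma3
    (r : ℕ) (hr : 1 ≤ r) (p q : ℂ) (hp : p ≠ 0) (hq : q ≠ 0)
    (hp1 : ‖p‖ < 1) (hq1 : ‖q‖ < 1)
    (m : ℤ) (z : ℂ) (hz : z ≠ 0)
    (hreg : lensReg r z m p q)
    (hden1 : ellGamma3 (q ^ ((r : ℤ) - m) * z) (p ^ r) (q ^ r) (p * q) ≠ 0)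
    (hden2 : ellGamma3 (p ^ m * z) (p ^ r) (q ^ r) (p * q) ≠ 0) :
    lensGamma r z m p q =
      (ellGamma3 ((p * q) ^ m * q ^ ((r : ℤ) - m) * z) (p ^ r) (q ^ r) (p * q) /
          ellGamma3 (q ^ ((r : ℤ) - m) * z) (p ^ r) (q ^ r) (p * q)) *
        (ellGamma3 ((p * q) ^ ((r : ℤ) - m) * p ^ m * z) (p ^ r) (q ^ r) (p * q) /
          ellGamma3 (p ^ m * z) (p ^ r) (q ^ r) (p * q)) :=
  lensGamma_as_ratio_of_ellGamma3_general r hr p q hp hq hp1 hq1 m z hreg hden1 hden2
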